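/- Let γ : ℝ → ℝ be continuous with γ(0) = 0 and s·γ(s) ≥ 0 for all s ∈ ℝ. Then for every nonzero v = (v₁, v₂) ∈ ℝ², the average function satisfies γ̄(v) = ρ̄(|v|) · v/|v|, where ρ̄ : [0, ∞) → [0, ∞) is given by ρ̄(s) := (1/2π) ∫_0^{2π} γ(s sin φ) sin φ dφ, and ρ̄(s) ≥ 0 for all s ≥ 0. -/

import Mathlib

open Real Set Filter MeasureTheory
open scoped RealInnerProductSpace

noncomputable section

/-- The plane `ℝ²` with the Euclidean norm. -/
abbrev E2 : Type := EuclideanSpace ℝ (Fin 2)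

/-- The vector `(a, b) ∈ ℝ²`. -/
def vec2 (a b : ℝ) : E2 := WithLp.toLp 2 ![a, b]

/-- `κ(s) = (2/π) ∫₀ˢ f(σ) √(1 - σ²/s²) dσ` (equal to `0` at `s = 0`). -/
def kappa (f : ℝ → ℝ) (s : ℝ) : ℝ :=
  (2 / π) * ∫ σ in (0:ℝ)..s, f σ * Real.sqrt (1 - σ ^ 2 / s ^ 2)

/-- The average function `f̄` of `f`. -/
def fbar (f : ℝ → ℝ) (v : E2) : E2 :=
  (1 / (2 * π)) • ∫ φ in (0:ℝ)..(2 * π),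
    (f (v 0 * Real.cos φ + v 1 * Real.sin φ) * (-(v 0) * Real.sin φ + v 1 * Real.cos φ)) •
      vec2 (-Real.sin φ) (Real.cos φ)

/-- The average function `γ̄` of a coupling function `γ`. -/
def gbar (γ : ℝ → ℝ) (v : E2) : E2 :=
  (1 / (2 * π)) • ∫ φ in (0:ℝ)..(2 * π),
    γ (-(v 0) * Real.sin φ + v 1 * Real.cos φ) • vec2 (-Real.sin φ) (Real.cos φ)

/-- `ρ̄(s) = (1/2π) ∫₀^{2π} γ(s sin φ) sin φ dφ`. -/
def rhobar (γ : ℝ → ℝ) (s : ℝ) : ℝ :=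
  (1 / (2 * π)) * ∫ φ in (0:ℝ)..(2 * π), γ (s * Real.sin φ) * Real.sin φ

/-- A class-K function: continuous on `[0, ∞)`, zero at zero, strictly increasing on `[0, ∞)`. -/
def ClassK (α : ℝ → ℝ) : Prop :=
  ContinuousOn α (Set.Ici 0) ∧ α 0 = 0 ∧ StrictMonoOn α (Set.Ici 0)

/-- Condition (L2) for a function `F` with crossing point `s₀ > 0`: `F(s₀) = 0`,
`F` negative on `(0, s₀)`, and `F` positive, nondecreasing and unbounded on `(s₀, ∞)`. -/
def CondL2 (F : ℝ → ℝ) (s₀ : ℝ) : Prop :=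
  0 < s₀ ∧ F s₀ = 0 ∧ (∀ s ∈ Set.Ioo (0:ℝ) s₀, F s < 0) ∧
    (∀ s ∈ Set.Ioi s₀, 0 < F s) ∧ MonotoneOn F (Set.Ioi s₀) ∧
    Filter.Tendsto F Filter.atTop Filter.atTop

/-- The state space `(ℝ²)^m` with the Euclidean norm of `ℝ^{2m}`. -/
abbrev St (m : ℕ) : Type := PiLp 2 (fun _ : Fin m => E2)

/-! Write `v = r (cos θ, sin θ)`; then `γ` is evaluated at `r sin (θ - φ)`. After the periodic
substitution `ψ = θ - φ`, the weight vector splits as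
`(-sin (θ - ψ), cos (θ - ψ)) = sin ψ • (cos θ, sin θ) + cos ψ • (-sin θ, cos θ)`, and the
component along `(-sin θ, cos θ)` is `∫₀^{2π} γ (r sin ψ) cos ψ dψ = ∫_{sin 0}^{sin 2π} γ (r x) dx = 0`.
For `s > 0` the integrand of `ρ̄(s)` is pointwise nonnegative since `s sin φ · γ (s sin φ) ≥ 0`. -/

theorem Function.Periodic.intervalIntegral_comp_sub_left {E : Type*} [NormedAddCommGroup E]
    [NormedSpace ℝ E] {F : ℝ → E} {T : ℝ} (hF : Function.Periodic F T) (θ : ℝ) :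
    ∫ φ in (0:ℝ)..T, F (θ - φ) = ∫ ψ in (0:ℝ)..T, F ψ := by
  simpa using hF.intervalIntegral_add_eq (θ - T) 0

theorem integral_comp_sin_mul_cos_eq_zero {g : ℝ → ℝ} (hg : Continuous g) :
    ∫ ψ in (0:ℝ)..(2 * π), g (Real.sin ψ) * Real.cos ψ = 0 := by
  have := intervalIntegral.integral_comp_mul_deriv (a := 0) (b := 2 * π)
    (fun x _ => Real.hasDerivAt_sin x) Real.continuous_cos.continuousOn hg
  simpa using this

theorem vec2_neg_sin_cos_sub (θ ψ : ℝ) :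
    vec2 (-Real.sin (θ - ψ)) (Real.cos (θ - ψ)) =
      Real.sin ψ • vec2 (Real.cos θ) (Real.sin θ) + Real.cos ψ • vec2 (-Real.sin θ) (Real.cos θ) := by
  ext i
  fin_cases i <;>
    simp only [vec2, Real.sin_sub, Real.cos_sub, Fin.zero_eta, Fin.mk_one, Fin.isValue,
      Matrix.cons_val_zero, Matrix.cons_val_one, Matrix.cons_val_fin_one, PiLp.add_apply,
      PiLp.smul_apply, smul_eq_mul] <;> ring

theorem exists_eq_norm_smul_vec2_cos_sin (v : E2) :
    ∃ θ : ℝ, v = ‖v‖ • vec2 (Real.cos θ) (Real.sin θ) := by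
  set z := Complex.orthonormalBasisOneI.repr.symm v
  have hz : ‖z‖ = ‖v‖ := Complex.orthonormalBasisOneI.repr.symm.norm_map v
  refine ⟨z.arg, ?_⟩
  ext i
  fin_cases i <;> simp [vec2, ← hz, Complex.norm_mul_cos_arg, Complex.norm_mul_sin_arg, z]

theorem rhobar_zero (γ : ℝ → ℝ) : rhobar γ 0 = 0 := by
  simp [rhobar, intervalIntegral.integral_const_mul]

theorem rhobar_nonneg {γ : ℝ → ℝ} (hsg : ∀ s : ℝ, 0 ≤ s * γ s) {s : ℝ} (hs : 0 ≤ s) :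
    0 ≤ rhobar γ s := by
  rcases hs.eq_or_lt with rfl | hs
  · exact (rhobar_zero γ).ge
  refine mul_nonneg (by positivity) (intervalIntegral.integral_nonneg (by positivity) fun φ _ => ?_)
  have := hsg (s * Real.sin φ)
  nlinarith

theorem gbar_smul_vec2_cos_sin {γ : ℝ → ℝ} (hγ : Continuous γ) (r θ : ℝ) :
    gbar γ (r • vec2 (Real.cos θ) (Real.sin θ)) = rhobar γ r • vec2 (Real.cos θ) (Real.sin θ) := by
  set u := vec2 (Real.cos θ) (Real.sin θ)
  set F : ℝ → E2 := fun ψ => γ (r * Real.sin ψ) • vec2 (-Real.sin (θ - ψ)) (Real.cos (θ - ψ))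
  have hF : Function.Periodic F (2 * π) := fun ψ => by
    simp only [F, Real.sin_add_two_pi, sub_add_eq_sub_sub, Real.sin_sub_two_pi, Real.cos_sub_two_pi]
  have hrot : ∀ φ, -(r • u) 0 * Real.sin φ + (r • u) 1 * Real.cos φ = r * Real.sin (θ - φ) := by
    intro φ
    simp only [u, vec2, PiLp.smul_apply, Fin.isValue, Matrix.cons_val_zero, Matrix.cons_val_one,
      Matrix.cons_val_fin_one, smul_eq_mul, Real.sin_sub]
    ring
  calc gbar γ (r • u)
      = (1 / (2 * π)) • ∫ φ in (0:ℝ)..(2 * π), F (θ - φ) := by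
        simp only [gbar, hrot, F, sub_sub_cancel]
    _ = (1 / (2 * π)) • ∫ ψ in (0:ℝ)..(2 * π),
          (γ (r * Real.sin ψ) * Real.sin ψ) • u +
            (γ (r * Real.sin ψ) * Real.cos ψ) • vec2 (-Real.sin θ) (Real.cos θ) := by
        rw [hF.intervalIntegral_comp_sub_left]
        simp only [F, u, vec2_neg_sin_cos_sub, smul_add, smul_smul]
    _ = rhobar γ r • u := by
        rw [intervalIntegral.integral_add, intervalIntegral.integral_smul_const,
          intervalIntegral.integral_smul_const,
          integral_comp_sin_mul_cos_eq_zero (g := fun x => γ (r * x)) (by fun_prop),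
          zero_smul, add_zero, smul_smul, rhobar]
        all_goals exact Continuous.intervalIntegrable (by fun_prop) _ _

theorem gbar_eq_rhobar_smul_general (γ : ℝ → ℝ) (hγ : Continuous γ)
    (hsg : ∀ s : ℝ, 0 ≤ s * γ s) :
    (∀ v : E2, v ≠ 0 → gbar γ v = (rhobar γ ‖v‖ / ‖v‖) • v) ∧
    (∀ s : ℝ, 0 ≤ s → 0 ≤ rhobar γ s) := by
  refine ⟨fun v hv => ?_, fun s => rhobar_nonneg hsg⟩
  obtain ⟨θ, hθ⟩ := exists_eq_norm_smul_vec2_cos_sin v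
  calc gbar γ v = gbar γ (‖v‖ • vec2 (Real.cos θ) (Real.sin θ)) := congrArg _ hθ
    _ = rhobar γ ‖v‖ • vec2 (Real.cos θ) (Real.sin θ) := gbar_smul_vec2_cos_sin hγ _ _
    _ = (rhobar γ ‖v‖ / ‖v‖) • ‖v‖ • vec2 (Real.cos θ) (Real.sin θ) := by
        rw [smul_smul, div_mul_cancel₀ _ (norm_ne_zero_iff.mpr hv)]
    _ = (rhobar γ ‖v‖ / ‖v‖) • v := by rw [← hθ]

/-- for continuous `γ` with `γ(0) = 0` and `s·γ(s) ≥ 0`, and nonzero `v ∈ ℝ²`,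
`γ̄(v) = ρ̄(|v|) · v / |v|`, with `ρ̄(s) ≥ 0` for all `s ≥ 0`. -/
theorem gbar_eq_rhobar_smul (γ : ℝ → ℝ) (hγ : Continuous γ) (h0 : γ 0 = 0)
    (hsg : ∀ s : ℝ, 0 ≤ s * γ s) :
    (∀ v : E2, v ≠ 0 → gbar γ v = (rhobar γ ‖v‖ / ‖v‖) • v) ∧
    (∀ s : ℝ, 0 ≤ s → 0 ≤ rhobar γ s) :=
  gbar_eq_rhobar_smul_general γ hγ hsg
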